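/- Squared-density of the mean-field Bose gas in the condensed regime: let β > 0, Δ ≥ 0 with ρ^P(β, −Δ) < ∞, λ₀ > 0, and μ > −Δ + λ₀·ρ^P(β, −Δ). Then the map λ ↦ p_λ^Δ(β,μ) is differentiable at λ₀ and −2·∂_λ p_λ^Δ(β,μ)|_{λ = λ₀} = (μ + Δ)²/λ₀². -/

import Mathlib

open MeasureTheory Filter

/-- Thermodynamic-limit pressure of the perfect Bose gas:
`p^P(β,μ) = -(1/(β (2π)^ν)) ∫ log(1 - e^{-β(|k|² - μ)}) dk`. -/
noncomputable def pP (ν : ℕ) (β μ : ℝ) : ℝ :=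
  -(1 / (β * (2 * Real.pi) ^ ν)) *
    ∫ k : EuclideanSpace ℝ (Fin ν), Real.log (1 - Real.exp (-(β * (‖k‖ ^ 2 - μ))))

/-- Thermodynamic-limit total density of the perfect Bose gas:
`ρ^P(β,μ) = (2π)^{-ν} ∫ (e^{β(|k|² - μ)} - 1)⁻¹ dk`. -/
noncomputable def rhoP (ν : ℕ) (β μ : ℝ) : ℝ :=
  ((2 * Real.pi) ^ ν)⁻¹ *
    ∫ k : EuclideanSpace ℝ (Fin ν), (Real.exp (β * (‖k‖ ^ 2 - μ)) - 1)⁻¹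

/-- Free energy of the perfect Bose gas with gap `Δ`:
`f^{P,Δ}(β,ρ) = sup_{μ ≤ -Δ} (ρ μ - p^P(β,μ))`. -/
noncomputable def fP (ν : ℕ) (β Δ ρ : ℝ) : ℝ :=
  sSup ((fun μ => ρ * μ - pP ν β μ) '' Set.Iic (-Δ))

/-- Grand-canonical pressure of the mean-field Bose gas with gap `Δ` and coupling `lam`:
`p_λ^Δ(β,μ) = sup_{ρ ≥ 0} (μ ρ - f^{P,Δ}(β,ρ) - λ ρ²/2)`. -/
noncomputable def pMF (ν : ℕ) (β lam Δ μ : ℝ) : ℝ :=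
  sSup ((fun ρ => μ * ρ - fP ν β Δ ρ - lam * ρ ^ 2 / 2) '' Set.Ici 0)

section Aux
open MeasureTheory

lemma exp_sub_one_pos' {t : ℝ} (ht : 0 < t) : (0:ℝ) < Real.exp t - 1 := by
  have := Real.add_one_le_exp t; linarith

lemma one_sub_exp_neg_pos' {t : ℝ} (ht : 0 < t) : (0:ℝ) < 1 - Real.exp (-t) := by
  have h1 : Real.exp (-t) < Real.exp 0 := Real.exp_lt_exp.mpr (by linarith)
  rw [Real.exp_zero] at h1; linarith

lemma inv_eq_aux' {t : ℝ} (ht : 0 < t) : (1 - Real.exp (-t))⁻¹ - 1 = (Real.exp t - 1)⁻¹ := by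
  have h2 := one_sub_exp_neg_pos' ht
  have h3 := exp_sub_one_pos' ht
  have h4 : Real.exp (-t) * Real.exp t = 1 := by rw [← Real.exp_add]; simp
  field_simp
  nlinarith [Real.exp_pos t, Real.exp_pos (-t)]

lemma abs_log_bound' {t : ℝ} (ht : 0 ≤ t) :
    |Real.log (1 - Real.exp (-t))| ≤ (Real.exp t - 1)⁻¹ := by
  rcases eq_or_lt_of_le ht with h | h
  · simp [← h]
  · have h2 := one_sub_exp_neg_pos' h
    have h3 := exp_sub_one_pos' h
    have hle1 : 1 - Real.exp (-t) ≤ 1 := by linarith [Real.exp_pos (-t)]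
    rw [abs_of_nonpos (Real.log_nonpos (le_of_lt h2) hle1), ← Real.log_inv]
    have h4 := Real.log_le_sub_one_of_pos (inv_pos.mpr h2)
    rw [← inv_eq_aux' h]; linarith

lemma log_one_sub_exp_nonpos' {t : ℝ} (ht : 0 ≤ t) : Real.log (1 - Real.exp (-t)) ≤ 0 := by
  rcases eq_or_lt_of_le ht with h | h
  · simp [← h]
  · exact Real.log_nonpos (le_of_lt (one_sub_exp_neg_pos' h)) (by linarith [Real.exp_pos (-t)])

lemma log_diff_bound' {t s : ℝ} (ht : 0 ≤ t) (hs : 0 ≤ s) :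
    Real.log (1 - Real.exp (-(t+s))) - Real.log (1 - Real.exp (-t)) ≤
      s * (Real.exp t - 1)⁻¹ := by
  rcases eq_or_lt_of_le ht with h | h
  · rw [← h]
    simp only [Real.exp_zero, sub_self, inv_zero, mul_zero, neg_zero, Real.log_zero, zero_add,
      sub_zero]
    exact log_one_sub_exp_nonpos' hs
  · have h2 := one_sub_exp_neg_pos' h
    have h3 := exp_sub_one_pos' h
    have hts : 0 < t + s := by linarith
    have h2' := one_sub_exp_neg_pos' hts
    rw [← Real.log_div (ne_of_gt h2') (ne_of_gt h2)]
    have h4 := Real.log_le_sub_one_of_pos (div_pos h2' h2)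
    have h5 : 1 - Real.exp (-s) ≤ s := by have := Real.add_one_le_exp (-s); linarith
    have h6 : Real.exp (-(t+s)) = Real.exp (-t) * Real.exp (-s) := by
      rw [← Real.exp_add]; ring_nf
    have h7 : (1 - Real.exp (-(t+s))) / (1 - Real.exp (-t)) - 1
        = Real.exp (-t) * (1 - Real.exp (-s)) / (1 - Real.exp (-t)) := by
      rw [h6]; field_simp; ring
    have h8 : Real.exp (-t) * (1 - Real.exp (-s)) / (1 - Real.exp (-t))
        ≤ Real.exp (-t) * s / (1 - Real.exp (-t)) := by
      gcongr
    have h9 : Real.exp (-t) * s / (1 - Real.exp (-t)) = s * (Real.exp t - 1)⁻¹ := by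
      rw [← inv_eq_aux' h]; field_simp; ring
    linarith

lemma measurable_logterm' (ν : ℕ) (β μ' : ℝ) : Measurable fun k : EuclideanSpace ℝ (Fin ν) =>
    Real.log (1 - Real.exp (-(β * (‖k‖ ^ 2 - μ')))) := by
  apply Real.measurable_log.comp
  fun_prop

end Aux
section Key
open MeasureTheory

lemma ae_norm_sq_pos' (ν : ℕ) (hν : 1 ≤ ν) :
    ∀ᵐ k : EuclideanSpace ℝ (Fin ν), 0 < ‖k‖ ^ 2 := by
  haveI : Nonempty (Fin ν) := ⟨⟨0, hν⟩⟩
  rw [MeasureTheory.ae_iff]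
  refine measure_mono_null ?_ (measure_singleton (0 : EuclideanSpace ℝ (Fin ν)))
  intro k hk
  simp only [Set.mem_setOf_eq, not_lt] at hk
  have : ‖k‖ = 0 := by nlinarith [norm_nonneg k, sq_nonneg ‖k‖]
  simpa using norm_eq_zero.mp this

lemma pP_nonneg' (ν : ℕ) (β : ℝ) (hβ : 0 < β) (μ' : ℝ) (hμ' : μ' ≤ 0) :
    0 ≤ pP ν β μ' := by
  have hI : (∫ k : EuclideanSpace ℝ (Fin ν),
      Real.log (1 - Real.exp (-(β * (‖k‖ ^ 2 - μ'))))) ≤ 0 := by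
    apply integral_nonpos
    intro k
    exact log_one_sub_exp_nonpos' (by nlinarith [sq_nonneg ‖k‖])
  have hc : (0:ℝ) < 1 / (β * (2 * Real.pi) ^ ν) := by positivity
  unfold pP
  nlinarith

lemma rhoP_nonneg' (ν : ℕ) (β : ℝ) (hβ : 0 < β) (Δ : ℝ) (hΔ : 0 ≤ Δ) :
    0 ≤ rhoP ν β (-Δ) := by
  unfold rhoP
  apply mul_nonneg (by positivity)
  apply integral_nonneg
  intro k
  apply inv_nonneg.mpr
  have : Real.exp 0 ≤ Real.exp (β * (‖k‖ ^ 2 - -Δ)) :=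
    Real.exp_le_exp.mpr (by nlinarith [sq_nonneg ‖k‖])
  rw [Real.exp_zero] at this; linarith

lemma pP_diff_bound' (ν : ℕ) (hν : 1 ≤ ν) (β : ℝ) (hβ : 0 < β) (Δ : ℝ) (hΔ : 0 ≤ Δ)
    (hfin : Integrable (fun k : EuclideanSpace ℝ (Fin ν) =>
      (Real.exp (β * (‖k‖ ^ 2 + Δ)) - 1)⁻¹))
    (μ' : ℝ) (hμ' : μ' ≤ -Δ) :
    pP ν β (-Δ) - pP ν β μ' ≤ (-Δ - μ') * rhoP ν β (-Δ) := by
  set s : ℝ := β * (-Δ - μ') with hs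
  have hs0 : 0 ≤ s := mul_nonneg hβ.le (by linarith)
  set Lδ : EuclideanSpace ℝ (Fin ν) → ℝ :=
    fun k => Real.log (1 - Real.exp (-(β * (‖k‖ ^ 2 - -Δ)))) with hLδ
  set Lμ : EuclideanSpace ℝ (Fin ν) → ℝ :=
    fun k => Real.log (1 - Real.exp (-(β * (‖k‖ ^ 2 - μ')))) with hLμ
  set ψ : EuclideanSpace ℝ (Fin ν) → ℝ :=
    fun k => (Real.exp (β * (‖k‖ ^ 2 + Δ)) - 1)⁻¹ with hψ
  have hψ0 : ∀ k, 0 ≤ ψ k := by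
    intro k
    apply inv_nonneg.mpr
    have : Real.exp 0 ≤ Real.exp (β * (‖k‖ ^ 2 + Δ)) :=
      Real.exp_le_exp.mpr (by nlinarith [sq_nonneg ‖k‖])
    rw [Real.exp_zero] at this; linarith
  have ht0 : ∀ k : EuclideanSpace ℝ (Fin ν), 0 ≤ β * (‖k‖ ^ 2 + Δ) := by
    intro k; nlinarith [sq_nonneg ‖k‖]
  have hrw : ∀ k : EuclideanSpace ℝ (Fin ν),
      β * (‖k‖ ^ 2 - μ') = β * (‖k‖ ^ 2 + Δ) + s := by
    intro k; rw [hs]; ring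
  have hrwδ : ∀ k : EuclideanSpace ℝ (Fin ν),
      β * (‖k‖ ^ 2 - -Δ) = β * (‖k‖ ^ 2 + Δ) := by
    intro k; ring
  -- integrability of Lδ
  have hLδint : Integrable Lδ := by
    apply hfin.mono ((measurable_logterm' ν β (-Δ)).aestronglyMeasurable)
    filter_upwards with k
    rw [Real.norm_eq_abs, Real.norm_eq_abs, abs_of_nonneg (hψ0 k)]
    simp only [hψ, hrwδ k]
    exact abs_log_bound' (ht0 k)
  -- integrability of Lμ
  have hLμint : Integrable Lμ := by
    apply hfin.mono ((measurable_logterm' ν β μ').aestronglyMeasurable)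
    filter_upwards [ae_norm_sq_pos' ν hν] with k hk
    rw [Real.norm_eq_abs, Real.norm_eq_abs, abs_of_nonneg (hψ0 k)]
    simp only [hψ, hrw k]
    have htpos : 0 < β * (‖k‖ ^ 2 + Δ) := by nlinarith
    have h1 : |Real.log (1 - Real.exp (-(β * (‖k‖ ^ 2 + Δ) + s)))| ≤
        (Real.exp (β * (‖k‖ ^ 2 + Δ) + s) - 1)⁻¹ := abs_log_bound' (by linarith)
    have h2 : (Real.exp (β * (‖k‖ ^ 2 + Δ) + s) - 1)⁻¹ ≤
        (Real.exp (β * (‖k‖ ^ 2 + Δ)) - 1)⁻¹ := by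
      apply inv_anti₀ (exp_sub_one_pos' htpos)
      have := Real.exp_le_exp.mpr (by linarith : β * (‖k‖ ^ 2 + Δ) ≤ β * (‖k‖ ^ 2 + Δ) + s)
      linarith
    exact h1.trans h2
  -- pointwise bound and integral comparison
  have hptw : ∀ k, Lμ k - Lδ k ≤ s * ψ k := by
    intro k
    simp only [hLμ, hLδ, hψ, hrw k, hrwδ k]
    exact log_diff_bound' (ht0 k) hs0
  have hint : (∫ k, (Lμ k - Lδ k)) ≤ ∫ k, s * ψ k := by
    apply integral_mono (hLμint.sub hLδint) (hfin.const_mul s) hptw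
  rw [integral_sub hLμint hLδint, integral_const_mul] at hint
  -- now unfold pP and rhoP
  have hpPδ : pP ν β (-Δ) = -(1 / (β * (2 * Real.pi) ^ ν)) * ∫ k, Lδ k := rfl
  have hpPμ : pP ν β μ' = -(1 / (β * (2 * Real.pi) ^ ν)) * ∫ k, Lμ k := rfl
  have hrho : rhoP ν β (-Δ) = ((2 * Real.pi) ^ ν)⁻¹ * ∫ k, ψ k := by
    unfold rhoP
    congr 1
    apply integral_congr_ae
    filter_upwards with k
    rw [hψ, hrwδ k]
  have hc : (0:ℝ) < 1 / (β * (2 * Real.pi) ^ ν) := by positivity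
  have h2π : (0:ℝ) < (2 * Real.pi) ^ ν := by positivity
  rw [hpPδ, hpPμ, hrho]
  have hkey : 1 / (β * (2 * Real.pi) ^ ν) * ((∫ k, Lμ k) - ∫ k, Lδ k)
      ≤ 1 / (β * (2 * Real.pi) ^ ν) * (s * ∫ k, ψ k) := by
    apply mul_le_mul_of_nonneg_left _ hc.le
    linarith
  have heq : 1 / (β * (2 * Real.pi) ^ ν) * (s * ∫ k, ψ k)
      = (-Δ - μ') * (((2 * Real.pi) ^ ν)⁻¹ * ∫ k, ψ k) := by
    rw [hs]; field_simp
  nlinarith [hkey, heq]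

end Key
/-- **Squared density of the mean-field Bose gas in the condensed regime.** Let `β > 0`,
`Δ ≥ 0` with `ρ^P(β,-Δ) < ∞` (encoded by integrability of the density integrand at
`μ = -Δ`), `λ₀ > 0` and `μ > -Δ + λ₀ ρ^P(β,-Δ)`. Then `λ ↦ p_λ^Δ(β,μ)` is
differentiable at `λ₀` and `-2 ∂_λ p_λ^Δ(β,μ)|_{λ=λ₀} = (μ + Δ)²/λ₀²`. -/
theorem mean_field_squared_density_condensed
    (ν : ℕ) (hν : 1 ≤ ν) (β : ℝ) (hβ : 0 < β)
    (Δ : ℝ) (hΔ : 0 ≤ Δ)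
    (hfin : Integrable (fun k : EuclideanSpace ℝ (Fin ν) =>
      (Real.exp (β * (‖k‖ ^ 2 + Δ)) - 1)⁻¹))
    (lam₀ : ℝ) (hlam₀ : 0 < lam₀)
    (μ : ℝ) (hμ : -Δ + lam₀ * rhoP ν β (-Δ) < μ) :
    ∃ d : ℝ, HasDerivAt (fun lam : ℝ => pMF ν β lam Δ μ) d lam₀ ∧
      -2 * d = (μ + Δ) ^ 2 / lam₀ ^ 2 := by
  set C : ℝ := pP ν β (-Δ) with hC
  set ρc : ℝ := rhoP ν β (-Δ) with hρc
  have hρc0 : 0 ≤ ρc := rhoP_nonneg' ν β hβ Δ hΔ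
  have hμΔ : lam₀ * ρc < μ + Δ := by linarith
  have hμΔ0 : 0 < μ + Δ := lt_of_le_of_lt (by nlinarith) hμΔ
  -- fP facts
  have hub0 : ∀ ρ' : ℝ, 0 ≤ ρ' → ∀ y ∈ (fun μ' => ρ' * μ' - pP ν β μ') '' Set.Iic (-Δ),
      y ≤ (0:ℝ) := by
    rintro ρ' hρ' y ⟨μ', hμ', rfl⟩
    simp only [Set.mem_Iic] at hμ'
    show ρ' * μ' - pP ν β μ' ≤ (0:ℝ)
    have h1 : 0 ≤ pP ν β μ' := pP_nonneg' ν β hβ μ' (by linarith)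
    have h2 : ρ' * μ' ≤ 0 := mul_nonpos_of_nonneg_of_nonpos hρ' (by linarith)
    linarith
  have hbdd : ∀ ρ' : ℝ, 0 ≤ ρ' →
      BddAbove ((fun μ' => ρ' * μ' - pP ν β μ') '' Set.Iic (-Δ)) := by
    intro ρ' hρ'
    exact ⟨0, fun y hy => hub0 ρ' hρ' y hy⟩
  have hfP_lower : ∀ ρ' : ℝ, 0 ≤ ρ' → -Δ * ρ' - C ≤ fP ν β Δ ρ' := by
    intro ρ' hρ'
    apply le_csSup (hbdd ρ' hρ')
    exact ⟨-Δ, Set.mem_Iic.mpr le_rfl, by rw [hC]; ring⟩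
  have hfP_eq : ∀ ρ' : ℝ, ρc ≤ ρ' → fP ν β Δ ρ' = -Δ * ρ' - C := by
    intro ρ' hρ'
    have hρ'0 : 0 ≤ ρ' := le_trans hρc0 hρ'
    apply le_antisymm
    · apply csSup_le (Set.Nonempty.image _ ⟨-Δ, Set.mem_Iic.mpr le_rfl⟩)
      rintro y ⟨μ', hμ', rfl⟩
      simp only [Set.mem_Iic] at hμ'
      show ρ' * μ' - pP ν β μ' ≤ -Δ * ρ' - C
      have h1 : pP ν β (-Δ) - pP ν β μ' ≤ (-Δ - μ') * ρc :=
        pP_diff_bound' ν hν β hβ Δ hΔ hfin μ' hμ'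
      have h2 : (-Δ - μ') * ρc ≤ (-Δ - μ') * ρ' :=
        mul_le_mul_of_nonneg_left hρ' (by linarith)
      rw [hC]
      nlinarith
    · exact hfP_lower ρ' hρ'0
  -- the value of pMF in the condensed regime
  have hval : ∀ lam : ℝ, 0 < lam → lam * ρc < μ + Δ →
      pMF ν β lam Δ μ = C + (μ + Δ) ^ 2 / 2 * lam⁻¹ := by
    intro lam hl hl2
    have hlne : lam ≠ 0 := ne_of_gt hl
    have hub : ∀ y ∈ (fun ρ' => μ * ρ' - fP ν β Δ ρ' - lam * ρ' ^ 2 / 2) '' Set.Ici 0,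
        y ≤ C + (μ + Δ) ^ 2 / 2 * lam⁻¹ := by
      rintro y ⟨ρ', hρ', rfl⟩
      simp only [Set.mem_Ici] at hρ'
      show μ * ρ' - fP ν β Δ ρ' - lam * ρ' ^ 2 / 2 ≤ C + (μ + Δ) ^ 2 / 2 * lam⁻¹
      have h1 := hfP_lower ρ' hρ'
      have h2 : lam * lam⁻¹ = 1 := mul_inv_cancel₀ hlne
      nlinarith [sq_nonneg (lam * ρ' - (μ + Δ)), mul_pos hl hl]
    unfold pMF
    apply le_antisymm
    · exact csSup_le (Set.Nonempty.image _ ⟨0, Set.mem_Ici.mpr le_rfl⟩) hub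
    · apply le_csSup ⟨C + (μ + Δ) ^ 2 / 2 * lam⁻¹, fun y hy => hub y hy⟩
      refine ⟨(μ + Δ) / lam, Set.mem_Ici.mpr (div_nonneg hμΔ0.le hl.le), ?_⟩
      show μ * ((μ + Δ) / lam) - fP ν β Δ ((μ + Δ) / lam) - lam * ((μ + Δ) / lam) ^ 2 / 2
        = C + (μ + Δ) ^ 2 / 2 * lam⁻¹
      have hrstar : ρc ≤ (μ + Δ) / lam := (le_div_iff₀ hl).mpr (by nlinarith)
      rw [hfP_eq _ hrstar]
      field_simp
      ring
  -- differentiability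
  have hd : HasDerivAt (fun lam : ℝ => C + (μ + Δ) ^ 2 / 2 * lam⁻¹)
      ((μ + Δ) ^ 2 / 2 * (-(lam₀ ^ 2)⁻¹)) lam₀ :=
    ((hasDerivAt_inv (ne_of_gt hlam₀)).const_mul ((μ + Δ) ^ 2 / 2)).const_add C
  have hev : (fun lam : ℝ => pMF ν β lam Δ μ)
      =ᶠ[nhds lam₀] fun lam : ℝ => C + (μ + Δ) ^ 2 / 2 * lam⁻¹ := by
    have hmem : {lam : ℝ | 0 < lam ∧ lam * ρc < μ + Δ} ∈ nhds lam₀ := by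
      apply IsOpen.mem_nhds
      · exact (isOpen_lt continuous_const continuous_id).and
          (isOpen_lt (continuous_id.mul continuous_const) continuous_const)
      · exact ⟨hlam₀, hμΔ⟩
    filter_upwards [hmem] with lam hlam
    exact hval lam hlam.1 hlam.2
  refine ⟨(μ + Δ) ^ 2 / 2 * (-(lam₀ ^ 2)⁻¹), hd.congr_of_eventuallyEq hev, ?_⟩
  have : lam₀ ^ 2 ≠ 0 := by positivity
  field_simp
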